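/- arXiv:1711.08731 — 2 statements merged into one kernel-verified Lean document; each statement's English description precedes it below -/
import Mathlib

section
/- Let m_0,…,m_{p−1} be positive integers with even sum m and each m_i < m/2, α = 1/p, m'_i = m_i + α, β = γ = 1. If R ⊆ {0,…,p−1} with |R| ≥ 2 satisfies ∑_{i∈R} m_i > m/2, then ∑_{i∈R} m_i ≥ m/2 + 1, and any gather tree over {indices in R} ∪ {p, p+1} (with m'_p = m/2, m'_{p+1} = m/2+1, complement R̄) rooted at p+1 with the two-subtree structure (R-tree into p+1, R̄-tree with block m'_p into p+1) has cost at least 3α + 2m + 2 > 2α + 2m + 2. -/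
open Finset

/-- A gather tree over processors `Fin n`, written in binary-join form: `node t s` means the
root of `t` (which is also the root of the combined tree) receives, as its last communication,
the whole data segment gathered in the subtree `s` from the root of `s`. -/
inductive GTree (n : ℕ) : Type where
  | leaf : Fin n → GTree n
  | node : GTree n → GTree n → GTree n

namespace GTree

/-- The root processor of a gather tree. -/
def root {n : ℕ} : GTree n → Fin n
  | leaf i => i
  | node t _ => t.root

/-- The set of processors spanned by a gather tree. -/
def members {n : ℕ} : GTree n → Finset (Fin n)
  | leaf i => {i}
  | node t s => t.members ∪ s.members

/-- A gather tree is valid if each processor occurs at most once in it. -/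
def valid {n : ℕ} : GTree n → Prop
  | leaf _ => True
  | node t s => t.valid ∧ s.valid ∧ Disjoint t.members s.members

/-- Total size of the data blocks gathered in a tree. -/
def size {n : ℕ} (m : Fin n → ℝ) : GTree n → ℝ
  | leaf i => m i
  | node t s => t.size m + s.size m

/-- Completion time (cost) of a gather tree under the one-ported linear cost model:
a singleton subtree accounts for the local copy `γ * m i` of its processor's own block,
and a join costs the maximum of the two subtree completion times plus the transmission
time `α + β * Size(sent subtree)`. -/
def cost {n : ℕ} (α β γ : ℝ) (m : Fin n → ℝ) : GTree n → ℝ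
  | leaf i => γ * m i
  | node t s => max (t.cost α β γ m) (s.cost α β γ m) + α + β * s.size m

/-- Number of children of the root of the tree. -/
def rootDeg {n : ℕ} : GTree n → ℕ
  | leaf _ => 0
  | node t _ => t.rootDeg + 1

end GTree

namespace GTree

variable {n : ℕ} {α : ℝ} (m : Fin n → ℝ)

theorem size_eq_sum_members {T : GTree n} (hT : T.valid) : T.size m = ∑ i ∈ T.members, m i := by
  induction T with
  | leaf i => simp [size, members]
  | node t s iht ihs =>
    obtain ⟨ht, hs, hdisj⟩ := hT
    simp only [size, members, iht ht, ihs hs, sum_union hdisj]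

theorem size_le_cost (hα : 0 ≤ α) (T : GTree n) : T.size m ≤ T.cost α 1 1 m := by
  induction T with
  | leaf i => simp [size, cost]
  | node t s iht _ =>
    simp only [size, cost, one_mul]
    linarith [le_max_left (t.cost α 1 1 m) (s.cost α 1 1 m)]

theorem add_size_le_cost_of_one_lt_card (hα : 0 ≤ α) {T : GTree n}
    (hT : 1 < T.members.card) : α + T.size m ≤ T.cost α 1 1 m := by
  cases T with
  | leaf i => simp [members] at hT
  | node t s =>
    simp only [size, cost, one_mul]
    linarith [size_le_cost m hα t, le_max_left (t.cost α 1 1 m) (s.cost α 1 1 m)]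

theorem cost_le_cost_node_node (t T₁ T₂ : GTree n) :
    T₁.cost α 1 1 m + 2 * α + T₁.size m + T₂.size m ≤
      (node (node t T₁) T₂).cost α 1 1 m := by
  simp only [cost, one_mul]
  linarith [le_max_right (t.cost α 1 1 m) (T₁.cost α 1 1 m),
    le_max_left (max (t.cost α 1 1 m) (T₁.cost α 1 1 m) + α + T₁.size m) (T₂.cost α 1 1 m)]

end GTree

theorem sum_image_castAdd {p k : ℕ} (m : Fin p → ℕ) (α : ℝ) (m' : Fin (p + k) → ℝ)
    (hm' : ∀ i, m' (Fin.castAdd k i) = (m i : ℝ) + α) (S : Finset (Fin p)) :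
    ∑ i ∈ S.image (Fin.castAdd k), m' i = ∑ i ∈ S, (m i : ℝ) + S.card * α := by
  rw [sum_image fun a _ b _ h => Fin.castAdd_injective p k h]
  simp [hm', sum_add_distrib, mul_comm]

theorem card_mul_add_card_compl_mul_eq_one {p : ℕ} (hp : 0 < p) (R : Finset (Fin p)) :
    (R.card : ℝ) * (1 / p) + Rᶜ.card * (1 / p) = 1 := by
  have hcard : ((R.card + Rᶜ.card : ℕ) : ℝ) = p := by
    rw [card_add_card_compl, Fintype.card_fin]
  push_cast at hcard
  rw [← add_mul, hcard]
  field_simp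

/- A tree on at least two processors pays a latency `α` on top of its size, so sending the `R`-subtree
into `p + 1` costs at least `2α + 2 ∑_R m'`; the `R̄`-subtree of size `M/2 + ∑_{R̄} m'` follows, and
`∑_R m ≥ M/2 + 1` turns the total `3α + 2 ∑_R m' + ∑_{R̄} m' + M/2` into at least `3α + 2M + 2`. -/
/-- The 'only if' direction, unbalanced case, of the NP-hardness reduction: if
`R ⊆ {0,…,p-1}` with `|R| ≥ 2` satisfies `∑_{i ∈ R} m i > M/2`, then
`∑_{i ∈ R} m i ≥ M/2 + 1`, and any gather tree of the two-subtree structure rooted at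
processor `p + 1` (an `R`-subtree sent into `p + 1`, then an `R̄ ∪ {p}`-subtree sent into
`p + 1`) has cost at least `3α + 2M + 2`, which exceeds `2α + 2M + 2`. -/
theorem stmt_9 (p : ℕ) (m : Fin p → ℕ)
    (M : ℕ) (hM : M = ∑ i, m i) (heven : 2 ∣ M)
    (α : ℝ) (hα : α = 1 / (p : ℝ))
    (m' : Fin (p + 2) → ℝ)
    (hm' : ∀ i : Fin p, m' (Fin.castAdd 2 i) = (m i : ℝ) + α)
    (hmp : m' ⟨p, by omega⟩ = (M : ℝ) / 2)
    (R : Finset (Fin p)) (hcard : 2 ≤ R.card) (hsum : M / 2 < ∑ i ∈ R, m i) :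
    M / 2 + 1 ≤ ∑ i ∈ R, m i ∧
    (∀ T₁ T₂ : GTree (p + 2),
      T₁.members = R.image (Fin.castAdd 2) →
      T₂.members = insert ⟨p, by omega⟩ (Rᶜ.image (Fin.castAdd 2)) →
      (GTree.node (GTree.node (GTree.leaf ⟨p + 1, by omega⟩) T₁) T₂).valid →
      3 * α + 2 * (M : ℝ) + 2 ≤
        (GTree.node (GTree.node (GTree.leaf ⟨p + 1, by omega⟩) T₁) T₂).cost α 1 1 m') ∧
    2 * α + 2 * (M : ℝ) + 2 < 3 * α + 2 * (M : ℝ) + 2 := by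
  have hp : 0 < p := by
    have := R.card_le_univ
    rw [Fintype.card_fin] at this
    omega
  have hα₀ : 0 < α := by rw [hα]; positivity
  obtain ⟨K, rfl⟩ := heven
  refine ⟨by omega, fun T₁ T₂ h₁ h₂ hT => ?_, by linarith⟩
  obtain ⟨⟨-, hT₁, -⟩, hT₂, -⟩ := hT
  have hS₁ : T₁.size m' = ∑ i ∈ R, (m i : ℝ) + R.card * α := by
    rw [GTree.size_eq_sum_members m' hT₁, h₁, sum_image_castAdd m α m' hm']
  have hS₂ : T₂.size m' = K + (∑ i ∈ Rᶜ, (m i : ℝ) + Rᶜ.card * α) := by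
    have hp_notMem : (⟨p, by omega⟩ : Fin (p + 2)) ∉ Rᶜ.image (Fin.castAdd 2) := by
      simpa [Fin.ext_iff] using fun x _ => x.isLt.ne
    rw [GTree.size_eq_sum_members m' hT₂, h₂, sum_insert hp_notMem, hmp,
      sum_image_castAdd m α m' hm']
    push_cast
    ring
  have hC₁ := GTree.add_size_le_cost_of_one_lt_card m' hα₀.le (T := T₁)
    (by rw [h₁, card_image_of_injective _ (Fin.castAdd_injective p 2)]; omega)
  have hR : (K : ℝ) + 1 ≤ ∑ i ∈ R, (m i : ℝ) := by exact_mod_cast (by omega : K + 1 ≤ ∑ i ∈ R, m i)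
  have hM' : ∑ i ∈ R, (m i : ℝ) + ∑ i ∈ Rᶜ, (m i : ℝ) = 2 * K := by
    rw [sum_add_sum_compl]
    exact_mod_cast hM.symm
  have hcardα := card_mul_add_card_compl_mul_eq_one hp R
  rw [← hα] at hcardα
  have hRα : 0 ≤ (R.card : ℝ) * α := by positivity
  push_cast
  linarith [GTree.cost_le_cost_node_node (α := α) m' (.leaf ⟨p + 1, by omega⟩) T₁ T₂]
end

section
/- The dynamic programming table C[i,j] defined by C[i,i] = 0 and C[i,j] = min_{i≤k<j} [max(C[i,k], C[k+1,j]) + min(α + β·S[i,k], α + β·S[k+1,j])] is monotone: for all i ≤ i' ≤ j' ≤ j, C[i',j'] ≤ C[i,j]. -/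
open Finset

/-- Sum of block sizes over the consecutive processor range `[i, k]`. -/
noncomputable def segSum (m : ℕ → ℝ) (i k : ℕ) : ℝ := ∑ t ∈ Finset.Icc i k, m t

/-- Homogeneous ordered-tree dynamic programming table (Figure 5, `γ = 0`):
`C[i,i] = 0` and, for `i < j`,
`C[i,j] = min_{i ≤ k < j} [max(C[i,k], C[k+1,j]) + min(α + β*S[i,k], α + β*S[k+1,j])]`. -/
noncomputable def dpC (m : ℕ → ℝ) (α β : ℝ) : ℕ → ℕ → ℝ
  | i, j =>
    if h : j ≤ i then 0
    else
      ((Finset.Ico i j).attach.inf'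
        (Finset.attach_nonempty_iff.mpr (by rw [Finset.nonempty_Ico]; omega)))
        fun k =>
          have hk := Finset.mem_Ico.mp k.2
          max (dpC m α β i k.1) (dpC m α β (k.1 + 1) j) +
            min (α + β * segSum m i k.1) (α + β * segSum m (k.1 + 1) j)
termination_by i j => j - i
decreasing_by
  · omega
  · omega

/-!
Induction on the length of `[i, j]`. Compare `C[i', j']` with every candidate split `k` of
`[i, j]`: if `[i', j']` lies inside one part `[i, k]` or `[k + 1, j]`, the induction hypothesis
bounds it by that part's cost, which the split cost dominates; otherwise `k` also splits
`[i', j']`, and both parts and both segment sums shrink, so that split is no more expensive.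
-/

section DynamicProgram

variable (m : ℕ → ℝ) (α β : ℝ)

noncomputable def splitCost (i k j : ℕ) : ℝ :=
  max (dpC m α β i k) (dpC m α β (k + 1) j) +
    min (α + β * segSum m i k) (α + β * segSum m (k + 1) j)

variable {m α β}

lemma segSum_le_segSum (hm : ∀ t, 0 ≤ m t) {a a' b b' : ℕ} (ha : a ≤ a') (hb : b' ≤ b) :
    segSum m a' b' ≤ segSum m a b :=
  sum_le_sum_of_subset_of_nonneg (Icc_subset_Icc ha hb) fun t _ _ => hm t

lemma dpC_of_le {i j : ℕ} (h : j ≤ i) : dpC m α β i j = 0 := by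
  rw [dpC, dif_pos h]

lemma dpC_le_splitCost {i k j : ℕ} (hik : i ≤ k) (hkj : k < j) :
    dpC m α β i j ≤ splitCost m α β i k j := by
  rw [dpC, dif_neg (by omega)]
  exact inf'_le _ (mem_attach _ ⟨k, mem_Ico.mpr ⟨hik, hkj⟩⟩)

lemma le_dpC_of_forall_le_splitCost {i j : ℕ} {c : ℝ} (hij : i < j)
    (h : ∀ k, i ≤ k → k < j → c ≤ splitCost m α β i k j) : c ≤ dpC m α β i j := by
  rw [dpC, dif_neg (by omega)]
  exact le_inf' _ _ fun k _ => h k.1 (mem_Ico.mp k.2).1 (mem_Ico.mp k.2).2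

lemma min_commCost_nonneg (hm : ∀ t, 0 ≤ m t) (hα : 0 ≤ α) (hβ : 0 ≤ β) (i k j : ℕ) :
    0 ≤ min (α + β * segSum m i k) (α + β * segSum m (k + 1) j) :=
  le_min (add_nonneg hα (mul_nonneg hβ (sum_nonneg fun t _ => hm t)))
    (add_nonneg hα (mul_nonneg hβ (sum_nonneg fun t _ => hm t)))

lemma dpC_left_le_splitCost (hm : ∀ t, 0 ≤ m t) (hα : 0 ≤ α) (hβ : 0 ≤ β) (i k j : ℕ) :
    dpC m α β i k ≤ splitCost m α β i k j :=
  le_add_of_le_of_nonneg (le_max_left _ _) (min_commCost_nonneg hm hα hβ i k j)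

lemma dpC_right_le_splitCost (hm : ∀ t, 0 ≤ m t) (hα : 0 ≤ α) (hβ : 0 ≤ β) (i k j : ℕ) :
    dpC m α β (k + 1) j ≤ splitCost m α β i k j :=
  le_add_of_le_of_nonneg (le_max_right _ _) (min_commCost_nonneg hm hα hβ i k j)

lemma dpC_nonneg (hm : ∀ t, 0 ≤ m t) (hα : 0 ≤ α) (hβ : 0 ≤ β) (i j : ℕ) :
    0 ≤ dpC m α β i j := by
  rcases le_or_gt j i with hji | hij
  · exact (dpC_of_le hji).ge
  · exact le_dpC_of_forall_le_splitCost hij fun k hik hkj =>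
      (dpC_nonneg hm hα hβ i k).trans (dpC_left_le_splitCost hm hα hβ i k j)
termination_by j - i

lemma splitCost_le_splitCost (hm : ∀ t, 0 ≤ m t) (hβ : 0 ≤ β) {i i' k j' j : ℕ}
    (hi : i ≤ i') (hj : j' ≤ j) (hleft : dpC m α β i' k ≤ dpC m α β i k)
    (hright : dpC m α β (k + 1) j' ≤ dpC m α β (k + 1) j) :
    splitCost m α β i' k j' ≤ splitCost m α β i k j := by
  have hsum_left := segSum_le_segSum hm hi (le_refl k)
  have hsum_right := segSum_le_segSum hm (le_refl (k + 1)) hj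
  unfold splitCost
  gcongr

end DynamicProgram

/-- Monotonicity of the DP table: subranges are never more expensive than the enclosing
range: for all `i ≤ i' ≤ j' ≤ j`, `C[i',j'] ≤ C[i,j]`. -/
theorem stmt_12 (m : ℕ → ℝ) (hm : ∀ t, 0 ≤ m t)
    (α β : ℝ) (hα : 0 ≤ α) (hβ : 0 ≤ β)
    (i i' j' j : ℕ) (h1 : i ≤ i') (h3 : j' ≤ j) :
    dpC m α β i' j' ≤ dpC m α β i j := by
  rcases le_or_gt j' i' with hji' | hij'
  · exact (dpC_of_le hji').trans_le (dpC_nonneg hm hα hβ i j)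
  refine le_dpC_of_forall_le_splitCost (by omega) fun k hik hkj => ?_
  rcases le_or_gt j' k with hk | hk
  · exact (stmt_12 m hm α β hα hβ i i' j' k h1 hk).trans (dpC_left_le_splitCost hm hα hβ i k j)
  rcases lt_or_ge k i' with hk' | hk'
  · exact (stmt_12 m hm α β hα hβ (k + 1) i' j' j hk' h3).trans
      (dpC_right_le_splitCost hm hα hβ i k j)
  exact (dpC_le_splitCost hk' hk).trans <| splitCost_le_splitCost hm hβ h1 h3
    (stmt_12 m hm α β hα hβ i i' k k h1 le_rfl)
    (stmt_12 m hm α β hα hβ (k + 1) (k + 1) j' j le_rfl h3)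
termination_by j - i
end
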